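/- Let 1 ≤ q < p ≤ ∞ and let A be an n×m complex matrix. Then ‖A‖_{1,∞} = ‖A‖_{p,q} if and only if A has at most one nonzero entry. -/

import Mathlib

open scoped BigOperators ENNReal

/-- The Hölder `ℓ_p` norm of a vector in `ℂ^m`, for `p ∈ [1,∞]`. -/
noncomputable def lpNorm {m : ℕ} (p : ℝ≥0∞) (x : Fin m → ℂ) : ℝ :=
  if p = ⊤ then ⨆ i, ‖x i‖ else (∑ i, ‖x i‖ ^ p.toReal) ^ (1 / p.toReal)

/-- The operator norm of an `n × m` complex matrix induced by `ℓ_p` on `ℂ^m`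
and `ℓ_q` on `ℂ^n`. -/
noncomputable def opNorm {n m : ℕ} (p q : ℝ≥0∞) (A : Matrix (Fin n) (Fin m) ℂ) : ℝ :=
  ⨆ x : {x : Fin m → ℂ // x ≠ 0}, lpNorm q (A.mulVec x.1) / lpNorm p x.1

/-- The operator norm of an `n × m` complex matrix induced by general norms
`μ` on `ℂ^m` and `ν` on `ℂ^n`. -/
noncomputable def opNormGen {n m : ℕ} (μ : (Fin m → ℂ) → ℝ) (ν : (Fin n → ℂ) → ℝ)
    (A : Matrix (Fin n) (Fin m) ℂ) : ℝ :=
  ⨆ x : {x : Fin m → ℂ // x ≠ 0}, ν (A.mulVec x.1) / μ x.1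

/- ### Auxiliary lemmas -/

lemma aux_rpow_superadd {a b s : ℝ} (ha : 0 ≤ a) (hb : 0 ≤ b) (hs : 1 ≤ s) :
    a ^ s + b ^ s ≤ (a + b) ^ s := by
  have h := NNReal.add_rpow_le_rpow_add (a.toNNReal) (b.toNNReal) hs
  have h2 := (NNReal.coe_le_coe.2 h)
  push_cast [NNReal.coe_rpow] at h2
  simpa [Real.coe_toNNReal _ ha, Real.coe_toNNReal _ hb] using h2

lemma lpNorm_nonneg {m : ℕ} (p : ℝ≥0∞) (x : Fin m → ℂ) : 0 ≤ lpNorm p x := by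
  rw [lpNorm]; split_ifs with h
  · exact Real.iSup_nonneg fun i => norm_nonneg _
  · exact Real.rpow_nonneg (Finset.sum_nonneg fun i _ => Real.rpow_nonneg (norm_nonneg _) _) _

lemma aux_rpow_inv_cancel {a s : ℝ} (ha : 0 ≤ a) (hs : s ≠ 0) : (a ^ s) ^ (1 / s) = a := by
  rw [← Real.rpow_mul ha, mul_one_div_cancel hs, Real.rpow_one]

lemma le_lpNorm {m : ℕ} {p : ℝ≥0∞} (hp : p ≠ 0) (x : Fin m → ℂ) (j : Fin m) :
    ‖x j‖ ≤ lpNorm p x := by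
  rw [lpNorm]; split_ifs with h
  · exact le_ciSup (Set.Finite.bddAbove (Set.finite_range fun i => ‖x i‖)) j
  · have hpt : 0 < p.toReal := ENNReal.toReal_pos hp h
    calc ‖x j‖ = (‖x j‖ ^ p.toReal) ^ (1 / p.toReal) :=
          (aux_rpow_inv_cancel (norm_nonneg _) hpt.ne').symm
      _ ≤ (∑ i, ‖x i‖ ^ p.toReal) ^ (1 / p.toReal) :=
          Real.rpow_le_rpow (Real.rpow_nonneg (norm_nonneg _) _)
            (Finset.single_le_sum (fun i _ => Real.rpow_nonneg (norm_nonneg _) _)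
              (Finset.mem_univ j)) (by positivity)

lemma lpNorm_pos {m : ℕ} {p : ℝ≥0∞} (hp : p ≠ 0) {x : Fin m → ℂ} (hx : x ≠ 0) :
    0 < lpNorm p x := by
  obtain ⟨j, hj⟩ := Function.ne_iff.1 hx
  exact lt_of_lt_of_le (norm_pos_iff.2 (by simpa using hj)) (le_lpNorm hp x j)

lemma lpNorm_single {m : ℕ} {p : ℝ≥0∞} (hp : p ≠ 0) (j : Fin m) (c : ℂ) :
    lpNorm p (Pi.single j c) = ‖c‖ := by
  rw [lpNorm]; split_ifs with h
  · apply le_antisymm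
    · apply Real.iSup_le _ (norm_nonneg c)
      intro i
      rcases eq_or_ne i j with rfl | hij
      · simp
      · simp [Pi.single_eq_of_ne hij]
    · have hb : BddAbove (Set.range fun i => ‖(Pi.single j c : Fin m → ℂ) i‖) :=
        Set.Finite.bddAbove (Set.finite_range _)
      have h2 := le_ciSup hb j
      simpa using h2
  · have hpt : 0 < p.toReal := ENNReal.toReal_pos hp h
    have hsum : ∑ i, ‖(Pi.single j c : Fin m → ℂ) i‖ ^ p.toReal = ‖c‖ ^ p.toReal := by
      rw [Finset.sum_eq_single j]
      · simp
      · intro i _ hij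
        simp [Pi.single_eq_of_ne hij, Real.zero_rpow hpt.ne']
      · simp
    rw [hsum, aux_rpow_inv_cancel (norm_nonneg _) hpt.ne']

lemma opNorm_le {n m : ℕ} {p q : ℝ≥0∞} (hp : p ≠ 0) (A : Matrix (Fin n) (Fin m) ℂ)
    {C : ℝ} (hC : 0 ≤ C)
    (h : ∀ x : Fin m → ℂ, x ≠ 0 → lpNorm q (A.mulVec x) ≤ C * lpNorm p x) :
    opNorm p q A ≤ C := by
  apply Real.iSup_le _ hC
  rintro ⟨x, hx⟩
  rw [div_le_iff₀ (lpNorm_pos hp hx)]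
  exact h x hx

lemma lpNorm_le_const {n : ℕ} {q : ℝ≥0∞} (hq : 1 ≤ q) (y : Fin n → ℂ) {B : ℝ}
    (hB : 0 ≤ B) (h : ∀ i, ‖y i‖ ≤ B) : lpNorm q y ≤ ((n : ℝ) + 1) * B := by
  have hn1 : (1 : ℝ) ≤ (n : ℝ) + 1 := le_add_of_nonneg_left (Nat.cast_nonneg n)
  have hnB : B ≤ ((n : ℝ) + 1) * B := le_mul_of_one_le_left hB hn1
  rw [lpNorm]; split_ifs with ht
  · exact (Real.iSup_le h hB).trans hnB
  · have hq0 : q ≠ 0 := (lt_of_lt_of_le zero_lt_one hq).ne'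
    have hqt1 : 1 ≤ q.toReal := by
      simpa using ENNReal.toReal_mono ht hq
    have hqt0 : 0 < q.toReal := lt_of_lt_of_le one_pos hqt1
    calc (∑ i, ‖y i‖ ^ q.toReal) ^ (1 / q.toReal)
        ≤ ((n : ℝ) * B ^ q.toReal) ^ (1 / q.toReal) := by
          apply Real.rpow_le_rpow
            (Finset.sum_nonneg fun i _ => Real.rpow_nonneg (norm_nonneg _) _) _ (by positivity)
          calc ∑ i, ‖y i‖ ^ q.toReal ≤ ∑ _i : Fin n, B ^ q.toReal :=
                Finset.sum_le_sum fun i _ => Real.rpow_le_rpow (norm_nonneg _) (h i) hqt0.le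
            _ = (n : ℝ) * B ^ q.toReal := by
                simp [Finset.sum_const, nsmul_eq_mul]
      _ = (n : ℝ) ^ (1 / q.toReal) * B := by
          rw [Real.mul_rpow (by positivity) (by positivity),
            aux_rpow_inv_cancel hB hqt0.ne']
      _ ≤ ((n : ℝ) + 1) * B := by
          apply mul_le_mul_of_nonneg_right _ hB
          calc (n : ℝ) ^ (1 / q.toReal) ≤ ((n : ℝ) + 1) ^ (1 / q.toReal) :=
                Real.rpow_le_rpow (by positivity) (by linarith) (by positivity)
            _ ≤ ((n : ℝ) + 1) ^ (1 : ℝ) :=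
                Real.rpow_le_rpow_of_exponent_le hn1
                  (by rw [div_le_one hqt0]; exact hqt1)
            _ = (n : ℝ) + 1 := Real.rpow_one _

lemma ratio_bddAbove {n m : ℕ} {p q : ℝ≥0∞} (hp : p ≠ 0) (hq : 1 ≤ q)
    (A : Matrix (Fin n) (Fin m) ℂ) :
    BddAbove (Set.range fun x : {x : Fin m → ℂ // x ≠ 0} =>
      lpNorm q (A.mulVec x.1) / lpNorm p x.1) := by
  set S : ℝ := ∑ i, ∑ j, ‖A i j‖ with hS
  have hS0 : 0 ≤ S := by positivity
  refine ⟨((n : ℝ) + 1) * S, ?_⟩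
  rintro _ ⟨⟨x, hx⟩, rfl⟩
  simp only
  rw [div_le_iff₀ (lpNorm_pos hp hx)]
  have hb : ∀ i, ‖A.mulVec x i‖ ≤ S * lpNorm p x := by
    intro i
    have : A.mulVec x i = ∑ j, A i j * x j := rfl
    rw [this]
    calc ‖∑ j, A i j * x j‖ ≤ ∑ j, ‖A i j * x j‖ := norm_sum_le _ _
      _ ≤ ∑ j, ‖A i j‖ * lpNorm p x := Finset.sum_le_sum fun j _ => by
            rw [norm_mul]
            exact mul_le_mul_of_nonneg_left (le_lpNorm hp x j) (norm_nonneg _)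
      _ = (∑ j, ‖A i j‖) * lpNorm p x := by rw [Finset.sum_mul]
      _ ≤ S * lpNorm p x := mul_le_mul_of_nonneg_right
            (Finset.single_le_sum (f := fun i => ∑ j, ‖A i j‖)
              (fun i _ => by positivity) (Finset.mem_univ i))
            (lpNorm_nonneg _ _)
  calc lpNorm q (A.mulVec x) ≤ ((n : ℝ) + 1) * (S * lpNorm p x) :=
        lpNorm_le_const hq _ (mul_nonneg hS0 (lpNorm_nonneg _ _)) hb
    _ = (((n : ℝ) + 1) * S) * lpNorm p x := by ring

lemma le_opNorm {n m : ℕ} {p q : ℝ≥0∞} (hp : p ≠ 0) (hq : 1 ≤ q)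
    (A : Matrix (Fin n) (Fin m) ℂ) {x : Fin m → ℂ} (hx : x ≠ 0) :
    lpNorm q (A.mulVec x) / lpNorm p x ≤ opNorm p q A :=
  le_ciSup (ratio_bddAbove hp hq A) ⟨x, hx⟩

lemma single_ne_zero' {m : ℕ} (j : Fin m) : (Pi.single j (1 : ℂ) : Fin m → ℂ) ≠ 0 := by
  intro h0
  have := congrFun h0 j
  simp at this

lemma opNorm_single_entry {n m : ℕ} {p q : ℝ≥0∞} (hp : p ≠ 0) (hq : 1 ≤ q)
    (A : Matrix (Fin n) (Fin m) ℂ) (i0 : Fin n) (j0 : Fin m)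
    (h : ∀ i j, ¬(i = i0 ∧ j = j0) → A i j = 0) :
    opNorm p q A = ‖A i0 j0‖ := by
  have hq0 : q ≠ 0 := (lt_of_lt_of_le zero_lt_one hq).ne'
  have hmv : ∀ x : Fin m → ℂ, A.mulVec x = Pi.single i0 (A i0 j0 * x j0) := by
    intro x
    funext i
    have happ : A.mulVec x i = ∑ j, A i j * x j := rfl
    rcases eq_or_ne i i0 with rfl | hi
    · rw [Pi.single_eq_same, happ, Finset.sum_eq_single j0]
      · intro j _ hj
        rw [h i j (by tauto), zero_mul]
      · intro hj; exact absurd (Finset.mem_univ j0) hj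
    · rw [Pi.single_eq_of_ne hi, happ]
      apply Finset.sum_eq_zero
      intro j _
      rw [h i j (by tauto), zero_mul]
  apply le_antisymm
  · apply opNorm_le hp A (norm_nonneg _)
    intro x hx
    rw [hmv, lpNorm_single hq0, norm_mul]
    exact mul_le_mul_of_nonneg_left (le_lpNorm hp x j0) (norm_nonneg _)
  · have h2 := le_opNorm hp hq A (single_ne_zero' j0)
    rwa [hmv, lpNorm_single hp, Pi.single_eq_same, mul_one, lpNorm_single hq0,
      norm_one, div_one] at h2

lemma opNorm_zero_entries {n m : ℕ} {p q : ℝ≥0∞} (hq : q ≠ 0)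
    (A : Matrix (Fin n) (Fin m) ℂ) (hA : ∀ i j, A i j = 0) :
    opNorm p q A = 0 := by
  have hmv : ∀ x : Fin m → ℂ, A.mulVec x = 0 := by
    intro x
    funext i
    have happ : A.mulVec x i = ∑ j, A i j * x j := rfl
    rw [happ]
    apply Finset.sum_eq_zero
    intro j _
    rw [hA i j, zero_mul]
  have hlz : lpNorm q (0 : Fin n → ℂ) = 0 := by
    rw [lpNorm]; split_ifs with h
    · refine le_antisymm (Real.iSup_le (fun i => by simp) le_rfl)
        (Real.iSup_nonneg fun i => by simp)
    · have hqt : 0 < q.toReal := ENNReal.toReal_pos hq h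
      rw [Finset.sum_eq_zero fun i _ => by simp [Real.zero_rpow hqt.ne'],
        Real.zero_rpow (by positivity)]
  rw [opNorm]
  have : ∀ x : {x : Fin m → ℂ // x ≠ 0}, lpNorm q (A.mulVec x.1) / lpNorm p x.1 = 0 := by
    intro x
    rw [hmv, hlz, zero_div]
  rw [iSup_congr this]
  rcases isEmpty_or_nonempty {x : Fin m → ℂ // x ≠ 0} with he | hne
  · rw [iSup, Set.range_eq_empty, Real.sSup_empty]
  · exact ciSup_const

set_option maxHeartbeats 2000000 in
/-- Theorem 3 (last assertion): for `1 ≤ q < p ≤ ∞`, equality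
`‖A‖_{1,∞} = ‖A‖_{p,q}` (i.e. equality in the bound (1.5) with `r = 1`,
`s = ∞`) holds if and only if `A` has at most one nonzero entry. -/
theorem stmt_15 {n m : ℕ} (A : Matrix (Fin n) (Fin m) ℂ) (p q : ℝ≥0∞)
    (hq : 1 ≤ q) (hqp : q < p) :
    opNorm 1 ⊤ A = opNorm p q A ↔
      ∀ i j i' j', A i j ≠ 0 → A i' j' ≠ 0 → i = i' ∧ j = j' := by
  have hq0 : q ≠ 0 := (lt_of_lt_of_le zero_lt_one hq).ne'
  have hqtop : q ≠ ⊤ := hqp.ne_top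
  have hp1 : 1 ≤ p := hq.trans hqp.le
  have hp0 : p ≠ 0 := (lt_of_lt_of_le zero_lt_one hp1).ne'
  have hqt1 : 1 ≤ q.toReal := by simpa using ENNReal.toReal_mono hqtop hq
  have hqt0 : 0 < q.toReal := lt_of_lt_of_le one_pos hqt1
  set qt := q.toReal with hqtdef
  constructor
  · -- hard direction
    intro heq
    by_contra hcon
    push_neg at hcon
    obtain ⟨i, j, i', j', hij, hij', hne⟩ := hcon
    -- max entry
    obtain ⟨⟨i0, j0⟩, -, hmax⟩ := Finset.exists_max_image (Finset.univ : Finset (Fin n × Fin m))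
      (fun pr => ‖A pr.1 pr.2‖) ⟨(i, j), Finset.mem_univ _⟩
    set M := ‖A i0 j0‖ with hM
    have hmax' : ∀ i' j', ‖A i' j'‖ ≤ M := fun a b => hmax (a, b) (Finset.mem_univ _)
    have hMpos : 0 < M := lt_of_lt_of_le (norm_pos_iff.2 hij) (hmax' i j)
    -- second nonzero entry
    have hsecond : ∃ i1 j1, A i1 j1 ≠ 0 ∧ (i1, j1) ≠ (i0, j0) := by
      by_cases h1 : (i, j) = (i0, j0)
      · refine ⟨i', j', hij', fun h2 => ?_⟩
        have h3 := h1.trans h2.symm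
        exact hne (congrArg Prod.fst h3) (congrArg Prod.snd h3)
      · exact ⟨i, j, hij, h1⟩
    obtain ⟨i1, j1, hA1, hne1⟩ := hsecond
    -- Step A : opNorm 1 ⊤ A ≤ M
    have hl1 : ∀ x : Fin m → ℂ, lpNorm 1 x = ∑ j', ‖x j'‖ := by
      intro x
      rw [lpNorm, if_neg ENNReal.one_ne_top]
      simp [Real.rpow_one]
    have hA_le : opNorm 1 ⊤ A ≤ M := by
      apply opNorm_le one_ne_zero A hMpos.le
      intro x hx
      rw [lpNorm, if_pos rfl, hl1]
      apply Real.iSup_le _ (by positivity)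
      intro i2
      have happ : A.mulVec x i2 = ∑ j2, A i2 j2 * x j2 := rfl
      rw [happ]
      calc ‖∑ j2, A i2 j2 * x j2‖ ≤ ∑ j2, ‖A i2 j2 * x j2‖ := norm_sum_le _ _
        _ ≤ ∑ j2, M * ‖x j2‖ := Finset.sum_le_sum fun j2 _ => by
              rw [norm_mul]
              exact mul_le_mul_of_nonneg_right (hmax' i2 j2) (norm_nonneg _)
        _ = M * ∑ j2, ‖x j2‖ := by rw [Finset.mul_sum]
    -- Step B : witness with ratio > M
    have hB : ∃ x : Fin m → ℂ, x ≠ 0 ∧ M < lpNorm q (A.mulVec x) / lpNorm p x := by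
      by_cases hcol : ∃ i2, i2 ≠ i0 ∧ A i2 j0 ≠ 0
      · -- Case I : two nonzero entries in column j0
        obtain ⟨i2, hi2, hA2⟩ := hcol
        refine ⟨Pi.single j0 1, single_ne_zero' j0, ?_⟩
        have hden : lpNorm p (Pi.single j0 (1 : ℂ)) = 1 := by
          rw [lpNorm_single hp0]; simp
        rw [hden, div_one]
        have hmv : A.mulVec (Pi.single j0 1) = fun i2 => A i2 j0 := by
          rw [Matrix.mulVec_single]
          funext i2; simp
        rw [hmv, lpNorm, if_neg hqtop]
        have hsum : M ^ qt < ∑ i3, ‖A i3 j0‖ ^ qt := by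
          have h2 : M ^ qt + ‖A i2 j0‖ ^ qt ≤ ∑ i3, ‖A i3 j0‖ ^ qt := by
            have hpair : M ^ qt + ‖A i2 j0‖ ^ qt
                = ∑ i3 ∈ ({i0, i2} : Finset (Fin n)), ‖A i3 j0‖ ^ qt := by
              rw [Finset.sum_pair (Ne.symm hi2)]
            rw [hpair]
            exact Finset.sum_le_sum_of_subset_of_nonneg (Finset.subset_univ _)
              (fun i3 _ _ => Real.rpow_nonneg (norm_nonneg _) _)
          have hpos : 0 < ‖A i2 j0‖ ^ qt := Real.rpow_pos_of_pos (norm_pos_iff.2 hA2) _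
          linarith
        calc M = (M ^ qt) ^ (1 / qt) := (aux_rpow_inv_cancel hMpos.le hqt0.ne').symm
          _ < (∑ i3, ‖A i3 j0‖ ^ qt) ^ (1 / qt) :=
              Real.rpow_lt_rpow (by positivity) hsum (by positivity)
      · -- Case II : column j0 has a single nonzero entry
        push_neg at hcol
        have hj1 : j1 ≠ j0 := by
          intro hj
          rcases eq_or_ne i1 i0 with h | h
          · exact hne1 (by rw [h, hj])
          · exact hA1 (by rw [hj]; exact hcol i1 h)
        set b := ‖A i1 j1‖ with hb
        have hbpos : 0 < b := norm_pos_iff.2 hA1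
        set a := A i0 j0 with ha
        set d := A i0 j1 with hd
        set c : ℂ := if d = 0 then 1 else ((‖d‖ / M : ℝ) : ℂ) * a / d with hc
        have hcnorm : ‖c‖ = 1 := by
          rw [hc]; split_ifs with h
          · simp
          · have hdn : ‖d‖ ≠ 0 := norm_ne_zero_iff.2 h
            have hM0 : M ≠ 0 := hMpos.ne'
            rw [norm_div, norm_mul, Complex.norm_real, Real.norm_eq_abs,
              abs_of_nonneg (by positivity), ← hM]
            field_simp
        have hrow0 : ∀ t : ℝ, 0 ≤ t → ‖a + (t : ℂ) * c * d‖ = M + t * ‖d‖ := by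
          intro t ht
          rw [hc]; split_ifs with h
          · simp [h, hM]
          · have he : a + (t : ℂ) * (((‖d‖ / M : ℝ) : ℂ) * a / d) * d
                = a * (1 + ((t * (‖d‖ / M) : ℝ) : ℂ)) := by
              have hM0 : (M : ℂ) ≠ 0 := Complex.ofReal_ne_zero.2 hMpos.ne'
              field_simp [h]
              push_cast; ring
            rw [he, norm_mul, ← hM]
            have h1 : ‖(1 + ((t * (‖d‖ / M) : ℝ) : ℂ))‖ = 1 + t * (‖d‖ / M) := by
              rw [show (1 : ℂ) + ((t * (‖d‖ / M) : ℝ) : ℂ) = (((1 + t * (‖d‖ / M) : ℝ)) : ℂ)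
                by push_cast; ring]
              rw [Complex.norm_real, Real.norm_eq_abs, abs_of_nonneg (by positivity)]
            rw [h1]
            field_simp
        -- the family of witness vectors
        set xv : ℝ → (Fin m → ℂ) := fun t => Pi.single j0 1 + Pi.single j1 ((t : ℂ) * c)
          with hxv
        have hxj0 : ∀ t, xv t j0 = 1 := by
          intro t
          simp [hxv, Pi.single_eq_same, Pi.single_eq_of_ne (Ne.symm hj1)]
        have hxj1 : ∀ t, xv t j1 = (t : ℂ) * c := by
          intro t
          simp [hxv, Pi.single_eq_same, Pi.single_eq_of_ne hj1]
        have hxo : ∀ j2, j2 ≠ j0 → j2 ≠ j1 → ∀ t, xv t j2 = 0 := by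
          intro j2 h2 h3 t
          simp [hxv, Pi.single_eq_of_ne h2, Pi.single_eq_of_ne h3]
        have hxne : ∀ t, xv t ≠ 0 := by
          intro t h0
          have := congrFun h0 j0
          rw [hxj0 t] at this
          simpa using this
        have hmv : ∀ t : ℝ, A.mulVec (xv t) = fun i2 => A i2 j0 + A i2 j1 * ((t : ℂ) * c) := by
          intro t
          rw [hxv]
          simp only [Matrix.mulVec_add, Matrix.mulVec_single]
          funext i2
          simp [mul_one]
        -- numerator bound
        have hnum : ∀ t : ℝ, 0 < t → t ≤ 1 →
            (M ^ qt + (t * b) ^ qt) ^ (1 / qt) ≤ lpNorm q (A.mulVec (xv t)) := by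
          intro t ht ht1
          rw [lpNorm, if_neg hqtop]
          apply Real.rpow_le_rpow (by positivity) _ (by positivity)
          have hri0 : ‖A.mulVec (xv t) i0‖ = M + t * ‖d‖ := by
            rw [hmv]
            simp only [← ha, ← hd]
            rw [show a + d * ((t : ℂ) * c) = a + (t : ℂ) * c * d by ring]
            exact hrow0 t ht.le
          rcases eq_or_ne i1 i0 with h | h
          · -- same row: use superadditivity
            have hdb : ‖d‖ = b := by rw [hd, hb, h]
            have hterm : M ^ qt + (t * b) ^ qt ≤ ‖A.mulVec (xv t) i0‖ ^ qt := by
              rw [hri0, hdb]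
              exact aux_rpow_superadd hMpos.le (by positivity) hqt1
            exact hterm.trans (Finset.single_le_sum
              (fun i3 _ => Real.rpow_nonneg (norm_nonneg _) _) (Finset.mem_univ i0))
          · -- different rows
            have hri1 : ‖A.mulVec (xv t) i1‖ = t * b := by
              rw [hmv]
              simp only
              rw [hcol i1 h, zero_add, norm_mul, norm_mul, hcnorm, Complex.norm_real,
                Real.norm_eq_abs, abs_of_pos ht, ← hb]
              ring
            have hpair : M ^ qt + (t * b) ^ qt
                ≤ ∑ i3 ∈ ({i0, i1} : Finset (Fin n)), ‖A.mulVec (xv t) i3‖ ^ qt := by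
              rw [Finset.sum_pair (Ne.symm h), hri0, hri1]
              have : M ^ qt ≤ (M + t * ‖d‖) ^ qt :=
                Real.rpow_le_rpow hMpos.le (le_add_of_nonneg_right (by positivity)) hqt0.le
              linarith
            exact hpair.trans (Finset.sum_le_sum_of_subset_of_nonneg (Finset.subset_univ _)
              (fun i3 _ _ => Real.rpow_nonneg (norm_nonneg _) _))
        -- now split on p
        by_cases hptop : p = ⊤
        · -- p = ∞ : take t = 1
          refine ⟨xv 1, hxne 1, ?_⟩
          have hden_le : lpNorm p (xv 1) ≤ 1 := by
            rw [hptop, lpNorm, if_pos rfl]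
            apply Real.iSup_le _ zero_le_one
            intro j2
            rcases eq_or_ne j2 j0 with rfl | h2
            · rw [hxj0]; simp
            rcases eq_or_ne j2 j1 with rfl | h3
            · rw [hxj1, norm_mul, hcnorm]; simp
            · rw [hxo j2 h2 h3]; simp
          have hden_pos : 0 < lpNorm p (xv 1) := lpNorm_pos hp0 (hxne 1)
          have hnum1 := hnum 1 one_pos le_rfl
          have hMlt : M < (M ^ qt + (1 * b) ^ qt) ^ (1 / qt) := by
            calc M = (M ^ qt) ^ (1 / qt) := (aux_rpow_inv_cancel hMpos.le hqt0.ne').symm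
              _ < (M ^ qt + (1 * b) ^ qt) ^ (1 / qt) := by
                  apply Real.rpow_lt_rpow (by positivity) _ (by positivity)
                  have : 0 < (1 * b) ^ qt := Real.rpow_pos_of_pos (by linarith) _
                  linarith
          rw [lt_div_iff₀ hden_pos]
          calc M * lpNorm p (xv 1) ≤ M * 1 :=
                mul_le_mul_of_nonneg_left hden_le hMpos.le
            _ = M := mul_one M
            _ < (M ^ qt + (1 * b) ^ qt) ^ (1 / qt) := hMlt
            _ ≤ lpNorm q (A.mulVec (xv 1)) := hnum1
        · -- p finite : choose small t
          set pt := p.toReal with hptdef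
          have hptlt : qt < pt := (ENNReal.toReal_lt_toReal hqtop hptop).2 hqp
          have hpt0 : 0 < pt := lt_of_le_of_lt hqt0.le hptlt
          set δ := pt - qt with hδ
          have hδ0 : 0 < δ := by rw [hδ]; linarith
          set r := min 1 ((b / M) ^ qt / 2) with hr
          have hr0 : 0 < r := by
            apply lt_min one_pos
            have : 0 < (b / M) ^ qt := Real.rpow_pos_of_pos (div_pos hbpos hMpos) _
            linarith
          have hr1 : r ≤ 1 := min_le_left _ _
          set t := r ^ (1 / δ) with htdef
          have ht0 : 0 < t := Real.rpow_pos_of_pos hr0 _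
          have ht1 : t ≤ 1 := Real.rpow_le_one hr0.le hr1 (by positivity)
          have htδ : t ^ δ = r := by
            rw [htdef, ← Real.rpow_mul hr0.le, one_div_mul_cancel hδ0.ne', Real.rpow_one]
          refine ⟨xv t, hxne t, ?_⟩
          -- denominator
          have hden : lpNorm p (xv t) = (1 + t ^ pt) ^ (1 / pt) := by
            rw [lpNorm, if_neg hptop, ← hptdef]
            congr 1
            have hvan : ∀ j2 ∈ (Finset.univ : Finset (Fin m)), j2 ∉ ({j0, j1} : Finset (Fin m)) →
                ‖xv t j2‖ ^ pt = 0 := by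
              intro j2 _ hj2
              simp only [Finset.mem_insert, Finset.mem_singleton] at hj2
              push_neg at hj2
              rw [hxo j2 hj2.1 hj2.2]
              simp [Real.zero_rpow hpt0.ne']
            rw [← Finset.sum_subset (Finset.subset_univ ({j0, j1} : Finset (Fin m))) hvan,
              Finset.sum_pair (Ne.symm hj1), hxj0, hxj1]
            rw [norm_one, Real.one_rpow, norm_mul, hcnorm, mul_one, Complex.norm_real,
              Real.norm_eq_abs, abs_of_pos ht0]
          have hden_pos : 0 < (1 + t ^ pt) ^ (1 / pt) := by positivity
          rw [hden, lt_div_iff₀ hden_pos]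
          -- key inequality
          have hkey : M * (1 + t ^ pt) ^ (1 / pt) < (M ^ qt + (t * b) ^ qt) ^ (1 / qt) := by
            set L := M * (1 + t ^ pt) ^ (1 / pt) with hL
            have hL0 : 0 ≤ L := by positivity
            have hLq : L ^ qt < M ^ qt + (t * b) ^ qt := by
              have h1 : L ^ qt = M ^ qt * ((1 + t ^ pt) ^ (1 / pt)) ^ qt := by
                rw [hL, Real.mul_rpow hMpos.le (by positivity)]
              have h2 : ((1 + t ^ pt) ^ (1 / pt)) ^ qt ≤ 1 + t ^ pt := by
                rw [← Real.rpow_mul (by positivity)]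
                calc (1 + t ^ pt) ^ (1 / pt * qt) ≤ (1 + t ^ pt) ^ (1 : ℝ) := by
                      apply Real.rpow_le_rpow_of_exponent_le
                      · have : 0 ≤ t ^ pt := by positivity
                        linarith
                      · rw [div_mul_eq_mul_div, one_mul, div_le_one hpt0]
                        exact hptlt.le
                  _ = 1 + t ^ pt := Real.rpow_one _
              have h3 : M ^ qt * t ^ pt < (t * b) ^ qt := by
                have htpt : t ^ pt = t ^ qt * r := by
                  rw [show pt = qt + δ by rw [hδ]; ring, Real.rpow_add ht0, htδ]
                have hMr : M ^ qt * r < b ^ qt := by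
                  have h4 : r ≤ (b / M) ^ qt / 2 := min_le_right _ _
                  have h5 : (b / M) ^ qt = b ^ qt / M ^ qt :=
                    Real.div_rpow hbpos.le hMpos.le _
                  have hMq : 0 < M ^ qt := Real.rpow_pos_of_pos hMpos _
                  have hbq : 0 < b ^ qt := Real.rpow_pos_of_pos hbpos _
                  calc M ^ qt * r ≤ M ^ qt * ((b / M) ^ qt / 2) :=
                        mul_le_mul_of_nonneg_left h4 hMq.le
                    _ = b ^ qt / 2 := by rw [h5]; field_simp
                    _ < b ^ qt := by linarith
                rw [htpt, Real.mul_rpow ht0.le hbpos.le]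
                calc M ^ qt * (t ^ qt * r) = t ^ qt * (M ^ qt * r) := by ring
                  _ < t ^ qt * b ^ qt :=
                    mul_lt_mul_of_pos_left hMr (Real.rpow_pos_of_pos ht0 _)
              calc L ^ qt ≤ M ^ qt * (1 + t ^ pt) := by
                    rw [h1]
                    exact mul_le_mul_of_nonneg_left h2 (by positivity)
                _ = M ^ qt + M ^ qt * t ^ pt := by ring
                _ < M ^ qt + (t * b) ^ qt := by linarith
            calc L = (L ^ qt) ^ (1 / qt) := (aux_rpow_inv_cancel hL0 hqt0.ne').symm
              _ < (M ^ qt + (t * b) ^ qt) ^ (1 / qt) :=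
                  Real.rpow_lt_rpow (by positivity) hLq (by positivity)
          calc M * (1 + t ^ pt) ^ (1 / pt) < (M ^ qt + (t * b) ^ qt) ^ (1 / qt) := hkey
            _ ≤ lpNorm q (A.mulVec (xv t)) := hnum t ht0 ht1
    obtain ⟨x, hx, hMx⟩ := hB
    have hle := le_opNorm hp0 hq A hx
    have hlt : M < opNorm p q A := lt_of_lt_of_le hMx hle
    rw [heq] at hA_le
    exact absurd hA_le (not_le.2 hlt)
  · -- easy direction
    intro h
    by_cases hA : ∀ i j, A i j = 0
    · rw [opNorm_zero_entries (by simp) A hA, opNorm_zero_entries hq0 A hA]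
    · push_neg at hA
      obtain ⟨i0, j0, h0⟩ := hA
      have hone : ∀ i j, ¬(i = i0 ∧ j = j0) → A i j = 0 := by
        intro i j hij
        by_contra hne
        exact hij (h i j i0 j0 hne h0)
      rw [opNorm_single_entry one_ne_zero le_top A i0 j0 hone,
        opNorm_single_entry hp0 hq A i0 j0 hone]
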